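/- arXiv:1604.02862 — 2 statements merged into one kernel-verified Lean document; each statement's English description precedes it below -/
import Mathlib

section
/- Let S be a numerical semigroup. Then |Star(S)| ≥ 1 + Σ_{a ∈ ℕ \ S} (a_⊆(Q_a(S)) − 1) ≥ 1 + Σ_{a ∈ ℕ \ S} |Q_a(S)|, where a_⊆(Q_a(S)) denotes the number of antichains of Q_a(S) with respect to inclusion. -/
/-- A numerical semigroup: a subset of ℕ containing 0, closed under addition,
with finite complement. -/
structure NumSgp where
  carrier : Set ℕ
  zero_mem : 0 ∈ carrier
  add_mem : ∀ a ∈ carrier, ∀ b ∈ carrier, a + b ∈ carrier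
  cofinite : carrierᶜ.Finite

/-- The copy of `S` inside ℤ. -/
def natS (S : NumSgp) : Set ℤ := (fun n : ℕ => (n : ℤ)) '' S.carrier

/-- A fractional ideal of `S`: a nonempty subset of ℤ, bounded below, with `I + S ⊆ I`. -/
def IsFracIdeal (S : NumSgp) (I : Set ℤ) : Prop :=
  I.Nonempty ∧ BddBelow I ∧ ∀ i ∈ I, ∀ s ∈ natS S, i + s ∈ I

/-- `(I − J) = {x ∈ ℤ : x + J ⊆ I}`. -/
def idealSub (I J : Set ℤ) : Set ℤ := {x : ℤ | ∀ j ∈ J, x + j ∈ I}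

/-- `F₀(S)`: fractional ideals `I` with `S ⊆ I ⊆ ℕ` (hence with minimal element 0). -/
def F0 (S : NumSgp) : Set (Set ℤ) :=
  {I | IsFracIdeal S I ∧ natS S ⊆ I ∧ I ⊆ {x : ℤ | 0 ≤ x}}

/-- The `v`-operation (divisorial closure): `I ↦ (S − (S − I))`. -/
def vOp (S : NumSgp) (I : Set ℤ) : Set ℤ := idealSub (natS S) (idealSub (natS S) I)

/-- An ideal is divisorial if it is `v`-closed. -/
def Divisorial (S : NumSgp) (I : Set ℤ) : Prop := vOp S I = I

/-- `G₀(S)`: the nondivisorial ideals in `F₀(S)`. -/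
def G0 (S : NumSgp) : Set (Set ℤ) := {I | I ∈ F0 S ∧ ¬ Divisorial S I}

/-- The action of the star operation `⋆_I` generated by `I`:
`J ↦ J^{⋆_I} = J^v ∩ (I − (I − J))`. -/
def starI (S : NumSgp) (I J : Set ℤ) : Set ℤ := vOp S J ∩ idealSub I (idealSub I J)

/-- The action of the star operation `⋆_Δ = inf_{I ∈ Δ} ⋆_I` generated by a set `Δ` of ideals:
`J ↦ J^{⋆_Δ} = J^v ∩ ⋂_{I ∈ Δ} (I − (I − J))`. -/
def starD (S : NumSgp) (Δ : Set (Set ℤ)) (J : Set ℤ) : Set ℤ :=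
  vOp S J ∩ ⋂ I ∈ Δ, idealSub I (idealSub I J)

/-- The ⋆-order: `I ≤⋆ J` iff `I` is `⋆_J`-closed. -/
def starle (S : NumSgp) (I J : Set ℤ) : Prop := starI S J I = I

/-- A star operation on `S`, given by its action on subsets of ℤ; it is normalized to be
the identity outside the fractional ideals, so that two star operations are equal iff they
agree on all fractional ideals. -/
structure StarOp (S : NumSgp) where
  toFun : Set ℤ → Set ℤ
  isFrac : ∀ I, IsFracIdeal S I → IsFracIdeal S (toFun I)
  subset_star : ∀ I, IsFracIdeal S I → I ⊆ toFun I
  mono : ∀ I J, IsFracIdeal S I → IsFracIdeal S J → I ⊆ J → toFun I ⊆ toFun J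
  idem : ∀ I, IsFracIdeal S I → toFun (toFun I) = toFun I
  transl : ∀ I, IsFracIdeal S I → ∀ a : ℤ,
    toFun ((fun x => a + x) '' I) = (fun x => a + x) '' toFun I
  star_S : toFun (natS S) = natS S
  default_eq : ∀ I, ¬ IsFracIdeal S I → toFun I = I

/-- The order on star operations: `s ≤ t` iff `I^s ⊆ I^t` for every fractional ideal `I`. -/
def StarOp.le {S : NumSgp} (s t : StarOp S) : Prop :=
  ∀ I, IsFracIdeal S I → s.toFun I ⊆ t.toFun I

/-- A star operation `s` is prime if whenever `s ≥ t ∧ u` (the infimum of two star operations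
being given by `I ↦ I^t ∩ I^u`), then `s ≥ t` or `s ≥ u`. -/
def StarOp.IsPrime {S : NumSgp} (s : StarOp S) : Prop :=
  ∀ t u : StarOp S,
    (∀ I, IsFracIdeal S I → t.toFun I ∩ u.toFun I ⊆ s.toFun I) →
    t.le s ∨ u.le s

/-- `I ∈ F₀(S)` is an atom if the star operation `⋆_I` is prime. -/
def AtomIdeal (S : NumSgp) (I : Set ℤ) : Prop :=
  I ∈ F0 S ∧ ∀ t u : StarOp S,
    (∀ J, IsFracIdeal S J → t.toFun J ∩ u.toFun J ⊆ starI S I J) →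
    (∀ J, IsFracIdeal S J → t.toFun J ⊆ starI S I J) ∨
    (∀ J, IsFracIdeal S J → u.toFun J ⊆ starI S I J)

/-- `M_a = {x ∈ ℕ : a − x ∉ S}`, the biggest ideal in `F₀(S)` not containing `a`. -/
def Mdual (S : NumSgp) (a : ℕ) : Set ℤ := {x : ℤ | 0 ≤ x ∧ ((a : ℤ) - x) ∉ natS S}

/-- `Q_a(S) = {I ∈ F₀(S) : a = sup(ℕ \ I), a ∈ I^v}`. -/
def Qa (S : NumSgp) (a : ℕ) : Set (Set ℤ) :=
  {I | I ∈ F0 S ∧ (a : ℤ) ∉ I ∧ (∀ x : ℤ, (a : ℤ) < x → x ∈ I) ∧ (a : ℤ) ∈ vOp S I}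

/-- The number of antichains (with respect to inclusion) of a family of ideals. -/
noncomputable def numInclAnti (Q : Set (Set ℤ)) : ℕ :=
  Set.ncard {Δ : Set (Set ℤ) | Δ ⊆ Q ∧ IsAntichain (· ⊆ ·) Δ}

/-- The `n`-th Dedekind number: the number of antichains of the power set of an
`n`-element set, ordered by inclusion. -/
noncomputable def dedekind (n : ℕ) : ℕ :=
  Nat.card {A : Set (Set (Fin n)) // IsAntichain (· ⊆ ·) A}

/-- `T(S) = (S − M_S) \ S`. -/
def Tset (S : NumSgp) : Set ℤ :=
  idealSub (natS S) ((fun n : ℕ => (n : ℤ)) '' (S.carrier \ {0})) \ natS S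

/-- The type `t(S) = |T(S)|`. -/
noncomputable def typeNum (S : NumSgp) : ℕ := (Tset S).ncard

/-- The Frobenius number `g(S)`: the largest integer not in `S`. -/
noncomputable def frob (S : NumSgp) : ℕ := sSup S.carrierᶜ

/-- The multiplicity `μ(S)`: the smallest nonzero element of `S`. -/
noncomputable def multNum (S : NumSgp) : ℕ := sInf (S.carrier \ {0})

/-- The degree of singularity `δ(S) = |ℕ \ S|`. -/
noncomputable def deltaNum (S : NumSgp) : ℕ := S.carrierᶜ.ncard

/-- `S` is symmetric if `g(S) − a ∈ S` for every `a ∈ ℕ \ S`. -/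
def IsSymmetricSgp (S : NumSgp) : Prop :=
  ∀ a : ℕ, a ∉ S.carrier → ((frob S : ℤ) - (a : ℤ)) ∈ natS S

section Aux

variable (S : NumSgp)

lemma natS_nonneg : natS S ⊆ {x : ℤ | 0 ≤ x} := by
  rintro x ⟨n, -, rfl⟩; exact Int.natCast_nonneg n

lemma zero_mem_natS : (0 : ℤ) ∈ natS S := ⟨0, S.zero_mem, rfl⟩

lemma natS_add {x y : ℤ} (hx : x ∈ natS S) (hy : y ∈ natS S) : x + y ∈ natS S := by
  obtain ⟨a, ha, rfl⟩ := hx; obtain ⟨b, hb, rfl⟩ := hy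
  exact ⟨a + b, S.add_mem a ha b hb, by push_cast; ring⟩

lemma natS_frac : IsFracIdeal S (natS S) :=
  ⟨⟨0, zero_mem_natS S⟩, ⟨0, fun x hx => natS_nonneg S hx⟩,
    fun i hi s hs => natS_add S hi hs⟩

lemma exists_bigBound : ∃ g : ℕ, ∀ n : ℤ, (g : ℤ) ≤ n → n ∈ natS S := by
  by_cases h : S.carrierᶜ.Nonempty
  · refine ⟨sSup S.carrierᶜ + 1, fun n hn => ?_⟩
    have hn0 : 0 ≤ n := le_trans (by positivity) hn
    lift n to ℕ using hn0
    refine ⟨n, ?_, rfl⟩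
    by_contra hmem
    have h1 : n ≤ sSup S.carrierᶜ := le_csSup S.cofinite.bddAbove hmem
    have : ((sSup S.carrierᶜ : ℕ) : ℤ) + 1 ≤ (n : ℤ) := by exact_mod_cast hn
    omega
  · refine ⟨0, fun n hn => ?_⟩
    lift n to ℕ using hn
    refine ⟨n, ?_, rfl⟩
    by_contra hmem
    exact h ⟨n, hmem⟩

end Aux
section Sub

lemma idealSub_antitone {I J J' : Set ℤ} (h : J ⊆ J') : idealSub I J' ⊆ idealSub I J :=
  fun _ hx j hj => hx j (h hj)

lemma subset_idealSub_idealSub (I J : Set ℤ) : J ⊆ idealSub I (idealSub I J) :=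
  fun j hj x hx => by rw [add_comm]; exact hx j hj

lemma idealSub_triple (I J : Set ℤ) :
    idealSub I (idealSub I (idealSub I J)) = idealSub I J :=
  subset_antisymm (idealSub_antitone (subset_idealSub_idealSub I J))
    (subset_idealSub_idealSub I (idealSub I J))

lemma idealSub_self_self (I : Set ℤ) : idealSub I (idealSub I I) = I := by
  apply subset_antisymm
  · intro x hx
    have h0 : (0 : ℤ) ∈ idealSub I I := fun j hj => by simpa using hj
    simpa using hx 0 h0
  · exact subset_idealSub_idealSub I I

lemma mem_transl {a y : ℤ} {I : Set ℤ} : y ∈ (fun x => a + x) '' I ↔ y - a ∈ I := by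
  constructor
  · rintro ⟨x, hx, rfl⟩; simpa using hx
  · intro h; exact ⟨y - a, h, by ring⟩

lemma transl_transl (a b : ℤ) (I : Set ℤ) :
    (fun x => a + x) '' ((fun x => b + x) '' I) = (fun x => (a + b) + x) '' I := by
  ext y; simp only [mem_transl]
  constructor
  · intro h
    have : y - a - b = y - (a + b) := by ring
    rwa [this] at h
  · intro h
    have : y - (a + b) = y - a - b := by ring
    rwa [this] at h

lemma transl_zero (I : Set ℤ) : (fun x => (0:ℤ) + x) '' I = I := by
  ext y; simp [mem_transl]

lemma idealSub_transl_right (I J : Set ℤ) (a : ℤ) :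
    idealSub I ((fun x => a + x) '' J) = (fun x => -a + x) '' idealSub I J := by
  ext x
  simp only [mem_transl, idealSub, Set.mem_setOf_eq]
  constructor
  · intro h j hj
    have h1 := h (a + j) (by rw [show a + j - a = j by ring]; exact hj)
    have h2 : x - -a + j = x + (a + j) := by ring
    rwa [h2]
  · intro h j hj
    have h1 := h (j - a) hj
    have h2 : x + j = x - -a + (j - a) := by ring
    rwa [h2]

lemma frac_transl {S : NumSgp} {I : Set ℤ} (hI : IsFracIdeal S I) (a : ℤ) :
    IsFracIdeal S ((fun x => a + x) '' I) := by
  obtain ⟨⟨i0, hi0⟩, ⟨m, hm⟩, hadd⟩ := hI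
  refine ⟨⟨a + i0, ⟨i0, hi0, rfl⟩⟩, ⟨a + m, ?_⟩, ?_⟩
  · rintro _ ⟨i, hi, rfl⟩; exact (add_le_add_iff_left a).2 (hm hi)
  · rintro _ ⟨i, hi, rfl⟩ s hs
    exact ⟨i + s, hadd i hi s hs, by ring⟩

lemma frac_idealSub {S : NumSgp} {I J : Set ℤ} (hI : IsFracIdeal S I) (hJ : IsFracIdeal S J) :
    IsFracIdeal S (idealSub I J) := by
  obtain ⟨⟨i0, hi0⟩, ⟨mI, hmI⟩, haddI⟩ := hI
  obtain ⟨⟨j0, hj0⟩, ⟨mJ, hmJ⟩, haddJ⟩ := hJ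
  obtain ⟨g, hg⟩ := exists_bigBound S
  refine ⟨⟨i0 + g - mJ, ?_⟩, ⟨mI - j0, ?_⟩, ?_⟩
  · intro j hj
    have h1 : (g : ℤ) ≤ g + (j - mJ) := by have := hmJ hj; omega
    have h2 : (i0 + g - mJ) + j = i0 + (g + (j - mJ)) := by ring
    rw [h2]; exact haddI i0 hi0 _ (hg _ h1)
  · intro x hx
    have := hmI (hx j0 hj0); omega
  · intro x hx s hs j hj
    have h1 : x + s + j = (x + j) + s := by ring
    rw [h1]; exact haddI _ (hx j hj) s hs

end Sub
section StarDLemmas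

variable (S : NumSgp)

lemma subset_vOp (J : Set ℤ) : J ⊆ vOp S J := subset_idealSub_idealSub _ _

lemma vOp_mono {J J' : Set ℤ} (h : J ⊆ J') : vOp S J ⊆ vOp S J' :=
  idealSub_antitone (idealSub_antitone h)

lemma vOp_natS : vOp S (natS S) = natS S := by
  apply subset_antisymm
  · intro x hx
    have h0 : (0 : ℤ) ∈ idealSub (natS S) (natS S) := fun j hj => by simpa using hj
    simpa using hx 0 h0
  · exact subset_vOp S _

lemma mem_starD {Δ : Set (Set ℤ)} {J : Set ℤ} {x : ℤ} :
    x ∈ starD S Δ J ↔ x ∈ vOp S J ∧ ∀ I ∈ Δ, x ∈ idealSub I (idealSub I J) := by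
  simp [starD]

lemma subset_starD (Δ : Set (Set ℤ)) (J : Set ℤ) : J ⊆ starD S Δ J := by
  intro x hx
  rw [mem_starD]
  exact ⟨subset_vOp S J hx, fun I _ => subset_idealSub_idealSub I J hx⟩

lemma starD_mono (Δ : Set (Set ℤ)) {J J' : Set ℤ} (h : J ⊆ J') :
    starD S Δ J ⊆ starD S Δ J' := by
  intro x hx
  rw [mem_starD] at hx ⊢
  exact ⟨vOp_mono S h hx.1,
    fun I hI => idealSub_antitone (idealSub_antitone h) (hx.2 I hI)⟩

lemma starD_idem (Δ : Set (Set ℤ)) (J : Set ℤ) :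
    starD S Δ (starD S Δ J) = starD S Δ J := by
  set K := starD S Δ J with hKdef
  have hJK : J ⊆ K := subset_starD S Δ J
  have hv : idealSub (natS S) K = idealSub (natS S) J := by
    apply subset_antisymm
    · exact idealSub_antitone hJK
    · have h1 : K ⊆ vOp S J := Set.inter_subset_left
      have h2 := idealSub_antitone (I := natS S) h1
      rw [show idealSub (natS S) (vOp S J) = idealSub (natS S) J from idealSub_triple _ _] at h2
      exact h2
  have hI : ∀ I ∈ Δ, idealSub I K = idealSub I J := by
    intro I hIΔ
    apply subset_antisymm
    · exact idealSub_antitone hJK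
    · have h1 : K ⊆ idealSub I (idealSub I J) := fun x hx => (mem_starD S |>.1 hx).2 I hIΔ
      have h2 := idealSub_antitone (I := I) h1
      rw [idealSub_triple] at h2
      exact h2
  have hvv : vOp S K = vOp S J := by
    show idealSub (natS S) (idealSub (natS S) K) = idealSub (natS S) (idealSub (natS S) J)
    rw [hv]
  have key : starD S Δ K = starD S Δ J := by
    ext x
    rw [mem_starD, mem_starD, hvv]
    constructor
    · rintro ⟨h1, h2⟩
      exact ⟨h1, fun I hIΔ => by have := h2 I hIΔ; rwa [hI I hIΔ] at this⟩
    · rintro ⟨h1, h2⟩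
      exact ⟨h1, fun I hIΔ => by rw [hI I hIΔ]; exact h2 I hIΔ⟩
  exact key.trans hKdef.symm

lemma vOp_transl (J : Set ℤ) (a : ℤ) :
    vOp S ((fun x => a + x) '' J) = (fun x => a + x) '' vOp S J := by
  show idealSub (natS S) (idealSub (natS S) ((fun x => a + x) '' J)) = _
  rw [idealSub_transl_right, idealSub_transl_right, neg_neg]
  rfl

lemma starD_transl (Δ : Set (Set ℤ)) (J : Set ℤ) (a : ℤ) :
    starD S Δ ((fun x => a + x) '' J) = (fun x => a + x) '' starD S Δ J := by
  ext x
  rw [mem_starD, mem_transl, mem_starD, vOp_transl, mem_transl]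
  have hdd : ∀ I : Set ℤ, idealSub I (idealSub I ((fun x => a + x) '' J))
      = (fun x => a + x) '' idealSub I (idealSub I J) := by
    intro I
    rw [idealSub_transl_right, idealSub_transl_right, neg_neg]
  constructor
  · rintro ⟨h1, h2⟩
    exact ⟨h1, fun I hI => by have := h2 I hI; rwa [hdd I, mem_transl] at this⟩
  · rintro ⟨h1, h2⟩
    exact ⟨h1, fun I hI => by rw [hdd I, mem_transl]; exact h2 I hI⟩

lemma starD_natS (Δ : Set (Set ℤ)) : starD S Δ (natS S) = natS S := by
  apply subset_antisymm
  · intro x hx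
    rw [mem_starD] at hx
    rw [← vOp_natS S]
    exact hx.1
  · exact subset_starD S Δ _

lemma starD_frac {Δ : Set (Set ℤ)} (hΔ : ∀ I ∈ Δ, IsFracIdeal S I) {J : Set ℤ}
    (hJ : IsFracIdeal S J) : IsFracIdeal S (starD S Δ J) := by
  have hvfrac : IsFracIdeal S (vOp S J) :=
    frac_idealSub (natS_frac S) (frac_idealSub (natS_frac S) hJ)
  refine ⟨hJ.1.mono (subset_starD S Δ J), hvfrac.2.1.mono Set.inter_subset_left, ?_⟩
  intro i hi s hs
  rw [mem_starD] at hi ⊢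
  refine ⟨hvfrac.2.2 i hi.1 s hs, fun I hIΔ => ?_⟩
  intro x hx
  have h1 : i + s + x = (i + x) + s := by ring
  rw [h1]
  exact (hΔ I hIΔ).2.2 _ (hi.2 I hIΔ x hx) s hs

lemma starD_closed_of_mem {Δ : Set (Set ℤ)} {I : Set ℤ} (hI : I ∈ Δ) :
    starD S Δ I = I := by
  apply subset_antisymm
  · intro x hx
    have := (mem_starD S |>.1 hx).2 I hI
    rw [idealSub_self_self] at this
    exact this
  · exact subset_starD S Δ I

end StarDLemmas

open Classical in
noncomputable def mkStar (S : NumSgp) (Δ : Set (Set ℤ)) (hΔ : ∀ I ∈ Δ, IsFracIdeal S I) :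
    StarOp S where
  toFun J := if IsFracIdeal S J then starD S Δ J else J
  isFrac J hJ := by rw [if_pos hJ]; exact starD_frac S hΔ hJ
  subset_star J hJ := by rw [if_pos hJ]; exact subset_starD S Δ J
  mono I J hI hJ h := by rw [if_pos hI, if_pos hJ]; exact starD_mono S Δ h
  idem J hJ := by
    rw [if_pos hJ, if_pos (starD_frac S hΔ hJ), starD_idem]
  transl J hJ a := by
    rw [if_pos hJ, if_pos (frac_transl hJ a), starD_transl]
  star_S := by rw [if_pos (natS_frac S), starD_natS]
  default_eq J hJ := if_neg hJ
section Finiteness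

variable (S : NumSgp)

lemma mem_natS_of_sSup_lt {n : ℤ} (hn : ((sSup S.carrierᶜ : ℕ) : ℤ) < n) : n ∈ natS S := by
  have hn0 : 0 ≤ n := by
    have : (0 : ℤ) ≤ ((sSup S.carrierᶜ : ℕ) : ℤ) := Int.natCast_nonneg _
    omega
  lift n to ℕ using hn0
  refine ⟨n, ?_, rfl⟩
  by_contra hmem
  have h1 : n ≤ sSup S.carrierᶜ := le_csSup S.cofinite.bddAbove hmem
  have : ((n : ℕ) : ℤ) ≤ ((sSup S.carrierᶜ : ℕ) : ℤ) := by exact_mod_cast h1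
  omega

lemma starOp_le_v (s : StarOp S) {I : Set ℤ} (hI : IsFracIdeal S I) :
    s.toFun I ⊆ vOp S I := by
  intro y hy x hx
  have h1 : (fun z => x + z) '' I ⊆ natS S := by
    rintro _ ⟨i, hi, rfl⟩; exact hx i hi
  have h2 : s.toFun ((fun z => x + z) '' I) ⊆ natS S := by
    have := s.mono _ _ (frac_transl hI x) (natS_frac S) h1
    rwa [s.star_S] at this
  rw [s.transl I hI x] at h2
  have h3 : x + y ∈ natS S := h2 ⟨y, hy, rfl⟩
  rwa [add_comm] at h3

lemma vOp_nonneg {I : Set ℤ} (hI : I ∈ F0 S) : vOp S I ⊆ {x : ℤ | 0 ≤ x} := by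
  intro y hy
  rw [Set.mem_setOf_eq]
  by_contra hneg
  push_neg at hneg
  by_cases h : S.carrierᶜ.Nonempty
  · set g : ℕ := sSup S.carrierᶜ with hgdef
    have hgmem : g ∉ S.carrier := Nat.sSup_mem h S.cofinite.bddAbove
    have hx : ((g : ℤ) - y) ∈ idealSub (natS S) I := by
      intro i hi
      have hi0 : 0 ≤ i := hI.2.2 hi
      exact mem_natS_of_sSup_lt S (by omega)
    have h2 := hy _ hx
    have heq : y + ((g : ℤ) - y) = (g : ℤ) := by ring
    rw [heq] at h2
    obtain ⟨m, hm, hme⟩ := h2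
    have hme' : (m : ℤ) = (g : ℤ) := hme
    have hmg : m = g := by exact_mod_cast hme'
    rw [hmg] at hm
    exact hgmem hm
  · have h0 : (0 : ℤ) ∈ idealSub (natS S) I := by
      intro i hi
      have hi0 : 0 ≤ i := hI.2.2 hi
      lift i to ℕ using hi0
      refine ⟨i, ?_, by simp⟩
      by_contra hmem
      exact h ⟨i, hmem⟩
    have h2 := hy _ h0
    have h3 : 0 ≤ y + 0 := natS_nonneg S h2
    omega

/-- The (integer) gaps of `S`. -/
def gapsZ : Set ℤ := {x : ℤ | 0 ≤ x ∧ x ∉ natS S}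

lemma gapsZ_finite : (gapsZ S).Finite := by
  have h : gapsZ S ⊆ (fun n : ℕ => (n : ℤ)) '' S.carrierᶜ := by
    rintro x ⟨hx0, hxn⟩
    lift x to ℕ using hx0
    exact ⟨x, fun hmem => hxn ⟨x, hmem, rfl⟩, rfl⟩
  exact (S.cofinite.image _).subset h

lemma decomp_F0 {I : Set ℤ} (h1 : natS S ⊆ I) (h2 : I ⊆ {x : ℤ | 0 ≤ x}) :
    I = natS S ∪ (I ∩ gapsZ S) := by
  apply subset_antisymm
  · intro x hx
    by_cases hn : x ∈ natS S
    · exact Or.inl hn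
    · exact Or.inr ⟨hx, h2 hx, hn⟩
  · rintro x (hx | hx)
    · exact h1 hx
    · exact hx.1

lemma F0_finite : (F0 S).Finite := by
  apply Set.Finite.of_finite_image (f := fun I => I ∩ gapsZ S)
  · apply Set.Finite.subset ((gapsZ_finite S).finite_subsets)
    rintro _ ⟨I, -, rfl⟩
    exact Set.inter_subset_right
  · rintro I hI J hJ hIJ
    dsimp only at hIJ
    rw [decomp_F0 S hI.2.1 hI.2.2, decomp_F0 S hJ.2.1 hJ.2.2, hIJ]

lemma starOp_mem_F0 (s : StarOp S) {I : Set ℤ} (hI : I ∈ F0 S) : s.toFun I ∈ F0 S := by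
  refine ⟨s.isFrac I hI.1, subset_trans hI.2.1 (s.subset_star I hI.1), ?_⟩
  exact subset_trans (starOp_le_v S s hI.1) (vOp_nonneg S hI)

lemma exists_min_of_frac {I : Set ℤ} (hI : IsFracIdeal S I) :
    ∃ m ∈ I, ∀ j ∈ I, m ≤ j := by
  obtain ⟨⟨i0, hi0⟩, ⟨b, hb⟩, -⟩ := hI
  obtain ⟨lb, hlb1, hlb2⟩ := Int.exists_least_of_bdd (P := fun z => z ∈ I) ⟨b, fun z hz => hb hz⟩ ⟨i0, hi0⟩
  exact ⟨lb, hlb1, hlb2⟩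

lemma frac_normalize {I : Set ℤ} (hI : IsFracIdeal S I) :
    ∃ m : ℤ, ∃ I0 ∈ F0 S, I = (fun x => m + x) '' I0 := by
  obtain ⟨m, hm, hmin⟩ := exists_min_of_frac S hI
  refine ⟨m, (fun x => -m + x) '' I, ⟨frac_transl hI (-m), ?_, ?_⟩, ?_⟩
  · intro s hs
    refine ⟨m + s, hI.2.2 m hm s hs, by ring⟩
  · rintro _ ⟨i, hi, rfl⟩
    have := hmin i hi
    simp only [Set.mem_setOf_eq]
    omega
  · rw [transl_transl]
    simp only [add_neg_cancel]
    rw [transl_zero]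

instance starOp_finite : Finite (StarOp S) := by
  have hgt : Finite ↥{T : Set ℤ | T ⊆ gapsZ S} := ((gapsZ_finite S).finite_subsets).to_subtype
  have hF0 : Finite ↥(F0 S) := (F0_finite S).to_subtype
  apply Finite.of_injective
    (f := fun (s : StarOp S) (I : ↥(F0 S)) =>
      (⟨s.toFun I ∩ gapsZ S, Set.inter_subset_right⟩ : ↥{T : Set ℤ | T ⊆ gapsZ S}))
  intro s t hst
  have key : ∀ I ∈ F0 S, s.toFun I = t.toFun I := by
    intro I hI
    have h1 := congrFun hst ⟨I, hI⟩
    have h2 : s.toFun I ∩ gapsZ S = t.toFun I ∩ gapsZ S := congrArg Subtype.val h1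
    have hs0 := starOp_mem_F0 S s hI
    have ht0 := starOp_mem_F0 S t hI
    rw [decomp_F0 S hs0.2.1 hs0.2.2, decomp_F0 S ht0.2.1 ht0.2.2, h2]
  have h : s.toFun = t.toFun := by
    funext J
    by_cases hJ : IsFracIdeal S J
    · obtain ⟨m, I0, hI0, rfl⟩ := frac_normalize S hJ
      rw [s.transl I0 hI0.1 m, t.transl I0 hI0.1 m, key I0 hI0]
    · rw [s.default_eq J hJ, t.default_eq J hJ]
  cases s; cases t
  simp only at h
  subst h
  rfl

end Finiteness
section QaLemmas

variable (S : NumSgp)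

lemma Qa_subset_F0 (a : ℕ) : Qa S a ⊆ F0 S := fun _ hI => hI.1

lemma zero_mem_of_F0 {I : Set ℤ} (hI : I ∈ F0 S) : (0 : ℤ) ∈ I := hI.2.1 (zero_mem_natS S)

/-- The "cut" lemma: for `L ∈ Q_a`-like ideals, `a ∈ (L − (L − I))` iff `I ⊄ L`. -/
lemma cut_lemma {a : ℕ} {I L : Set ℤ} (h0I : (0 : ℤ) ∈ I)
    (hLnn : L ⊆ {x : ℤ | 0 ≤ x}) (hLgt : ∀ x : ℤ, (a : ℤ) < x → x ∈ L)
    (hLa : (a : ℤ) ∉ L) :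
    (a : ℤ) ∈ idealSub L (idealSub L I) ↔ ¬ I ⊆ L := by
  constructor
  · intro h hIL
    have h0 : (0 : ℤ) ∈ idealSub L I := fun j hj => by simpa using hIL hj
    have := h 0 h0
    simp only [add_zero] at this
    exact hLa this
  · intro hIL x hx
    have hxL : x ∈ L := by simpa using hx 0 h0I
    have hx0 : 0 ≤ x := hLnn hxL
    rcases eq_or_lt_of_le hx0 with heq | hlt
    · exact absurd (fun j hj => by simpa [← heq] using hx j hj) hIL
    · exact hLgt _ (by omega)

/-- For `L ∈ Q_b` with `b < a`, `L` never cuts `a`. -/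
lemma no_cut_lemma {a b : ℕ} (hba : b < a) {I L : Set ℤ} (h0I : (0 : ℤ) ∈ I)
    (hLnn : L ⊆ {x : ℤ | 0 ≤ x}) (hLgt : ∀ x : ℤ, (b : ℤ) < x → x ∈ L) :
    (a : ℤ) ∈ idealSub L (idealSub L I) := by
  intro x hx
  have hxL : x ∈ L := by simpa using hx 0 h0I
  have hx0 : 0 ≤ x := hLnn hxL
  apply hLgt
  have : (b : ℤ) < (a : ℤ) := by exact_mod_cast hba
  omega

lemma mem_starD_of_lt {a b : ℕ} (hba : b < a) {Δ : Set (Set ℤ)} (hΔ : Δ ⊆ Qa S b)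
    {I : Set ℤ} (hI : I ∈ F0 S) (hv : (a : ℤ) ∈ vOp S I) :
    (a : ℤ) ∈ starD S Δ I := by
  rw [mem_starD]
  refine ⟨hv, fun L hL => ?_⟩
  obtain ⟨hLF0, -, hLgt, -⟩ := hΔ hL
  exact no_cut_lemma hba (zero_mem_of_F0 S hI) hLF0.2.2 hLgt

/-- Key recovery: if `starD Δ` and `starD Δ'` agree on fractional ideals, with `Δ, Δ' ⊆ Q_a`
and `Δ` an antichain, then `Δ ⊆ Δ'`. -/
lemma starD_eq_subset {a : ℕ} {Δ Δ' : Set (Set ℤ)} (hΔ : Δ ⊆ Qa S a) (hΔ' : Δ' ⊆ Qa S a)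
    (hanti : IsAntichain (· ⊆ ·) Δ)
    (heq : ∀ J, IsFracIdeal S J → starD S Δ J = starD S Δ' J) :
    Δ ⊆ Δ' := by
  intro I hIΔ
  obtain ⟨hIF0, hIa, hIgt, hIv⟩ := hΔ hIΔ
  -- I is starD Δ'-closed
  have hIc : starD S Δ' I = I := (heq I hIF0.1).symm.trans (starD_closed_of_mem S hIΔ)
  -- hence a ∉ starD Δ' I, so some L' ∈ Δ' with I ⊆ L'
  have hna : (a : ℤ) ∉ starD S Δ' I := by rw [hIc]; exact hIa
  rw [mem_starD] at hna
  push_neg at hna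
  obtain ⟨L', hL', hcut⟩ := hna hIv
  obtain ⟨hL'F0, hL'a, hL'gt, hL'v⟩ := hΔ' hL'
  have hIL' : I ⊆ L' := by
    by_contra hc
    exact hcut ((cut_lemma (zero_mem_of_F0 S hIF0) hL'F0.2.2 hL'gt hL'a).2 hc)
  -- L' is starD Δ-closed
  have hL'c : starD S Δ L' = L' := (heq L' hL'F0.1).trans (starD_closed_of_mem S hL')
  have hna2 : (a : ℤ) ∉ starD S Δ L' := by rw [hL'c]; exact hL'a
  rw [mem_starD] at hna2
  push_neg at hna2
  obtain ⟨L, hL, hcut2⟩ := hna2 hL'v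
  obtain ⟨hLF0, hLa, hLgt, hLv⟩ := hΔ hL
  have hL'L : L' ⊆ L := by
    by_contra hc
    exact hcut2 ((cut_lemma (zero_mem_of_F0 S hL'F0) hLF0.2.2 hLgt hLa).2 hc)
  -- I ⊆ L' ⊆ L with I, L ∈ Δ antichain
  have hIL : I = L := by
    by_contra hne
    exact hanti hIΔ hL hne (subset_trans hIL' hL'L)
  have : I = L' := subset_antisymm hIL' (hIL ▸ hL'L)
  rw [this]
  exact hL'

lemma starD_eq_iff {a : ℕ} {Δ Δ' : Set (Set ℤ)} (hΔ : Δ ⊆ Qa S a) (hΔ' : Δ' ⊆ Qa S a)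
    (hanti : IsAntichain (· ⊆ ·) Δ) (hanti' : IsAntichain (· ⊆ ·) Δ')
    (heq : ∀ J, IsFracIdeal S J → starD S Δ J = starD S Δ' J) :
    Δ = Δ' :=
  subset_antisymm (starD_eq_subset S hΔ hΔ' hanti heq)
    (starD_eq_subset S hΔ' hΔ hanti' (fun J hJ => (heq J hJ).symm))

/-- Distinct gaps give distinct star operations. -/
lemma starD_ne_of_lt {a b : ℕ} (hba : b < a) {Δ Δ' : Set (Set ℤ)} (hΔ : Δ ⊆ Qa S a)
    (hne : Δ.Nonempty) (hΔ' : Δ' ⊆ Qa S b) :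
    ¬ ∀ J, IsFracIdeal S J → starD S Δ J = starD S Δ' J := by
  intro heq
  obtain ⟨I, hIΔ⟩ := hne
  obtain ⟨hIF0, hIa, hIgt, hIv⟩ := hΔ hIΔ
  have h1 : starD S Δ I = I := starD_closed_of_mem S hIΔ
  have h2 : (a : ℤ) ∈ starD S Δ' I := mem_starD_of_lt S hba hΔ' hIF0 hIv
  rw [← heq I hIF0.1, h1] at h2
  exact hIa h2

/-- `⋆_Δ` differs from `v` (`= ⋆_∅`). -/
lemma starD_ne_empty {a : ℕ} {Δ : Set (Set ℤ)} (hΔ : Δ ⊆ Qa S a) (hne : Δ.Nonempty) :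
    ¬ ∀ J, IsFracIdeal S J → starD S Δ J = starD S (∅ : Set (Set ℤ)) J := by
  intro heq
  obtain ⟨I, hIΔ⟩ := hne
  obtain ⟨hIF0, hIa, hIgt, hIv⟩ := hΔ hIΔ
  have h1 : starD S Δ I = I := starD_closed_of_mem S hIΔ
  have h2 : (a : ℤ) ∈ starD S (∅ : Set (Set ℤ)) I := by
    rw [mem_starD]
    exact ⟨hIv, fun L hL => absurd hL (Set.notMem_empty L)⟩
  rw [← heq I hIF0.1, h1] at h2
  exact hIa h2

end QaLemmas
section Counting

/-- Nonempty antichains of a family of ideals. -/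
def AntiNE (Q : Set (Set ℤ)) : Set (Set (Set ℤ)) :=
  {Δ | Δ ⊆ Q ∧ IsAntichain (· ⊆ ·) Δ ∧ Δ.Nonempty}

lemma antiSet_eq (Q : Set (Set ℤ)) :
    {Δ : Set (Set ℤ) | Δ ⊆ Q ∧ IsAntichain (· ⊆ ·) Δ} = insert ∅ (AntiNE Q) := by
  ext Δ
  simp only [Set.mem_setOf_eq, Set.mem_insert_iff, AntiNE]
  constructor
  · rintro ⟨h1, h2⟩
    rcases Set.eq_empty_or_nonempty Δ with h | h
    · exact Or.inl h
    · exact Or.inr ⟨h1, h2, h⟩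
  · rintro (rfl | ⟨h1, h2, h3⟩)
    · exact ⟨Set.empty_subset Q, fun x hx => absurd hx (Set.notMem_empty x)⟩
    · exact ⟨h1, h2⟩

lemma AntiNE_finite {Q : Set (Set ℤ)} (hQ : Q.Finite) : (AntiNE Q).Finite :=
  hQ.finite_subsets.subset (fun _ hΔ => hΔ.1)

lemma numInclAnti_eq {Q : Set (Set ℤ)} (hQ : Q.Finite) :
    numInclAnti Q = (AntiNE Q).ncard + 1 := by
  rw [numInclAnti, antiSet_eq,
    Set.ncard_insert_of_notMem (fun h => h.2.2.ne_empty rfl) (AntiNE_finite hQ)]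

lemma ncard_le_AntiNE {Q : Set (Set ℤ)} (hQ : Q.Finite) :
    Q.ncard ≤ (AntiNE Q).ncard := by
  exact Set.ncard_le_ncard_of_injOn (fun I => {I})
    (fun I hI => ⟨Set.singleton_subset_iff.2 hI, Set.pairwise_singleton I _,
      Set.singleton_nonempty I⟩)
    (fun a _ b _ h => Set.singleton_eq_singleton_iff.1 h)
    (AntiNE_finite hQ)

lemma mkStar_inj_aux (S : NumSgp) {Δ Δ' : Set (Set ℤ)} {hΔ : ∀ I ∈ Δ, IsFracIdeal S I}
    {hΔ' : ∀ I ∈ Δ', IsFracIdeal S I} (h : mkStar S Δ hΔ = mkStar S Δ' hΔ') :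
    ∀ J, IsFracIdeal S J → starD S Δ J = starD S Δ' J := by
  intro J hJ
  have h2 := congrFun (congrArg StarOp.toFun h) J
  simp only [mkStar] at h2
  rwa [if_pos hJ, if_pos hJ] at h2

end Counting

/-- `|Star(S)| ≥ 1 + Σ_{a ∈ ℕ \ S}(a_⊆(Q_a(S)) − 1) ≥ 1 + Σ_{a ∈ ℕ \ S}|Q_a(S)|`. -/
theorem card_star_ge_sum_Qa (S : NumSgp) :
    (1 + ∑ᶠ a ∈ S.carrierᶜ, (numInclAnti (Qa S a) - 1) ≤ Nat.card (StarOp S)) ∧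
    (1 + ∑ᶠ a ∈ S.carrierᶜ, (Qa S a).ncard ≤
      1 + ∑ᶠ a ∈ S.carrierᶜ, (numInclAnti (Qa S a) - 1)) := by
  classical
  have hQfin : ∀ a : ℕ, (Qa S a).Finite := fun a => (F0_finite S).subset (Qa_subset_F0 S a)
  constructor
  · set C := S.cofinite.toFinset with hC
    rw [finsum_mem_eq_finite_toFinset_sum _ S.cofinite]
    set β : ↥C → Type := fun a => ↥(AntiNE (Qa S (a : ℕ))) with hβ
    haveI : ∀ a : ↥C, Fintype (β a) := fun a => (AntiNE_finite (hQfin (a : ℕ))).fintype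
    set Ω := (a : ↥C) × β a with hΩdef
    have hcard : Nat.card (Option Ω) = 1 + ∑ a ∈ C, (numInclAnti (Qa S a) - 1) := by
      rw [Finite.card_option, Nat.card_eq_fintype_card, Fintype.card_sigma]
      have hβc : ∀ a : ↥C, Fintype.card (β a) = numInclAnti (Qa S (a : ℕ)) - 1 := by
        intro a
        rw [← Nat.card_eq_fintype_card, Nat.card_coe_set_eq, numInclAnti_eq (hQfin (a : ℕ))]
        omega
      rw [Finset.sum_congr rfl (fun a _ => hβc a)]
      rw [Finset.sum_coe_sort C (fun a => numInclAnti (Qa S a) - 1)]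
      omega
    rw [← hcard]
    have hQF : ∀ (Δ : Set (Set ℤ)), Δ ⊆ Qa S (0 : ℕ) → True := fun _ _ => trivial
    set F : Option Ω → StarOp S := fun o =>
      match o with
      | none => mkStar S ∅ (fun I hI => absurd hI (Set.notMem_empty I))
      | some p => mkStar S p.2.1 (fun I hI => ((p.2.2.1 hI).1).1)
      with hF
    have hFinj : Function.Injective F := by
      rintro (_ | ⟨a, Δa⟩) (_ | ⟨b, Δb⟩) h
      · rfl
      · exfalso
        apply starD_ne_empty S Δb.2.1 Δb.2.2.2
        intro J hJ
        exact (mkStar_inj_aux S h J hJ).symm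
      · exfalso
        exact starD_ne_empty S Δa.2.1 Δa.2.2.2 (mkStar_inj_aux S h)
      · have heq := mkStar_inj_aux S h
        rcases lt_trichotomy (a : ℕ) (b : ℕ) with hlt | heqab | hgt
        · exfalso
          exact starD_ne_of_lt S hlt Δb.2.1 Δb.2.2.2 Δa.2.1
            (fun J hJ => (heq J hJ).symm)
        · have hab : a = b := Subtype.ext heqab
          subst hab
          have hΔab : Δa = Δb := Subtype.ext
            (starD_eq_iff S Δa.2.1 Δb.2.1 Δa.2.2.1 Δb.2.2.1 heq)
          rw [hΔab]
        · exfalso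
          exact starD_ne_of_lt S hgt Δa.2.1 Δa.2.2.2 Δb.2.1 heq
    exact Nat.card_le_card_of_injective F hFinj
  · rw [finsum_mem_eq_finite_toFinset_sum _ S.cofinite,
      finsum_mem_eq_finite_toFinset_sum _ S.cofinite]
    apply Nat.add_le_add_left
    apply Finset.sum_le_sum
    intro a _
    have h1 : (Qa S a).ncard ≤ (AntiNE (Qa S a)).ncard := ncard_le_AntiNE (hQfin a)
    rw [numInclAnti_eq (hQfin a)]
    omega
end

section
/- Let μ ≥ 3 be an integer and let S := {0, μ, μ+1, …, 2μ−3} ∪ {x ∈ ℕ : x ≥ 2μ−1} (i.e., S = {0, μ, μ+1, …, 2μ−3, 2μ−1, →}). Then |Star(S)| = 1 + D(μ − 2), where D(n) is the n-th Dedekind number. -/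
namespace CardStarAux

open Set

lemma mem_idealSub {K J : Set ℤ} {x : ℤ} : x ∈ idealSub K J ↔ ∀ j ∈ J, x + j ∈ K := Iff.rfl

lemma subset_idealSub_idealSub {K J : Set ℤ} : J ⊆ idealSub K (idealSub K J) := by
  intro j hj x hx
  simpa [add_comm] using hx j hj

lemma idealSub_anti (K : Set ℤ) {J J' : Set ℤ} (h : J ⊆ J') :
    idealSub K J' ⊆ idealSub K J := fun x hx j hj => hx j (h hj)

lemma idealSub_idealSub_idealSub (K J : Set ℤ) :
    idealSub K (idealSub K (idealSub K J)) = idealSub K J :=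
  Set.Subset.antisymm (idealSub_anti K subset_idealSub_idealSub) subset_idealSub_idealSub

lemma mem_translate {a x : ℤ} {X : Set ℤ} : x ∈ (fun y => a + y) '' X ↔ x - a ∈ X := by
  constructor
  · rintro ⟨y, hy, rfl⟩; simpa
  · intro h; exact ⟨x - a, h, by ring⟩

lemma translate_translate (a b : ℤ) (X : Set ℤ) :
    (fun y => a + y) '' ((fun y => b + y) '' X) = (fun y => (a + b) + y) '' X := by
  ext x
  rw [mem_translate, mem_translate, mem_translate]
  have : x - a - b = x - (a + b) := by ring
  rw [this]

lemma translate_zero (X : Set ℤ) : (fun y => (0:ℤ) + y) '' X = X := by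
  ext x; rw [mem_translate]; norm_num

lemma translate_subset_translate (a : ℤ) {X Y : Set ℤ} (h : X ⊆ Y) :
    (fun y => a + y) '' X ⊆ (fun y => a + y) '' Y := Set.image_mono h

lemma idealSub_translate_right (a : ℤ) (K J : Set ℤ) :
    idealSub K ((fun y => a + y) '' J) = (fun y => -a + y) '' idealSub K J := by
  ext x
  rw [mem_translate]
  constructor
  · intro h j hj
    have := h (a + j) ⟨j, hj, rfl⟩
    have e : x + (a + j) = x - -a + j := by ring
    rwa [e] at this
  · rintro h j ⟨j', hj', rfl⟩
    have := h j' hj'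
    have e : x - -a + j' = x + (a + j') := by ring
    rwa [e] at this

lemma idealSub_translate_left (a : ℤ) (K J : Set ℤ) :
    idealSub ((fun y => a + y) '' K) J = (fun y => a + y) '' idealSub K J := by
  ext x
  rw [mem_translate]
  constructor
  · intro h j hj
    have := h j hj
    rw [mem_translate] at this
    have e : x + j - a = x - a + j := by ring
    rwa [e] at this
  · intro h j hj
    rw [mem_translate]
    have := h j hj
    have e : x - a + j = x + j - a := by ring
    rwa [e] at this

lemma vOp_translate (S : NumSgp) (a : ℤ) (J : Set ℤ) :
    vOp S ((fun y => a + y) '' J) = (fun y => a + y) '' vOp S J := by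
  unfold vOp
  rw [idealSub_translate_right, idealSub_translate_right, neg_neg]

end CardStarAux
namespace CardStarAux

def SZ (μ : ℕ) : Set ℤ := {x | x = 0 ∨ ((μ:ℤ) ≤ x ∧ x ≠ 2*(μ:ℤ) - 2)}
def M1 (μ : ℕ) : Set ℤ := insert ((μ:ℤ) - 1) (SZ μ)
def IA (μ : ℕ) (A : Set ℤ) : Set ℤ := insert (2*(μ:ℤ) - 2) (SZ μ ∪ A)
def Amax (μ : ℕ) : Set ℤ := Set.Icc 1 ((μ:ℤ) - 2)
def Nset (μ : ℕ) : Set (Set ℤ) := insert (M1 μ) {I | ∃ A, A ⊆ Amax μ ∧ I = IA μ A}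
/-- normalized ideal predicate -/
def Nrm (μ : ℕ) (I : Set ℤ) : Prop :=
  SZ μ ⊆ I ∧ (∀ x ∈ I, 0 ≤ x) ∧ ∀ i ∈ I, ∀ s ∈ SZ μ, i + s ∈ I

variable {μ : ℕ}

lemma mem_SZ {x : ℤ} : x ∈ SZ μ ↔ x = 0 ∨ ((μ:ℤ) ≤ x ∧ x ≠ 2*(μ:ℤ) - 2) := Iff.rfl

lemma zero_mem_SZ : (0:ℤ) ∈ SZ μ := Or.inl rfl

lemma SZ_add {x y : ℤ} (hx : x ∈ SZ μ) (hy : y ∈ SZ μ) : x + y ∈ SZ μ := by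
  simp only [mem_SZ] at *; omega

lemma SZ_nonneg {x : ℤ} (hx : x ∈ SZ μ) : 0 ≤ x := by
  simp only [mem_SZ] at hx; omega

lemma big_mem_SZ (hμ : 3 ≤ μ) {x : ℤ} (h : 2*(μ:ℤ) - 1 ≤ x) : x ∈ SZ μ := by
  have h3 : (3:ℤ) ≤ (μ:ℤ) := by exact_mod_cast hμ
  simp only [mem_SZ]; omega

lemma Nrm_SZ : Nrm μ (SZ μ) :=
  ⟨le_refl _, fun _ h => SZ_nonneg h, fun _ hi _ hs => SZ_add hi hs⟩

lemma idealSub_SZ_SZ : idealSub (SZ μ) (SZ μ) = SZ μ := by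
  apply Set.Subset.antisymm
  · intro x hx
    have := hx 0 zero_mem_SZ
    simpa using this
  · intro x hx j hj
    exact SZ_add hx hj

lemma vset_eq (hμ : 3 ≤ μ) {I : Set ℤ} (hI : Nrm μ I) (hne : I ≠ SZ μ) :
    idealSub (SZ μ) (idealSub (SZ μ) I) =
      {y : ℤ | 0 ≤ y ∧ (1 ≤ y → y ≤ (μ:ℤ) - 2 → y ∈ I)} := by
  obtain ⟨hSI, hpos, hstab⟩ := hI
  have h3 : (3:ℤ) ≤ (μ:ℤ) := by exact_mod_cast hμ
  ext y
  simp only [mem_idealSub, Set.mem_setOf_eq]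
  constructor
  · intro hy
    constructor
    · by_contra hneg
      have hx : (2*(μ:ℤ) - 2 - y) ∈ idealSub (SZ μ) I := by
        intro i hi
        have := hpos i hi
        exact big_mem_SZ hμ (by omega)
      have := hy _ hx
      simp only [mem_SZ] at this; omega
    · intro h1 h2
      by_contra hyI
      have hx : (2*(μ:ℤ) - 2 - y) ∈ idealSub (SZ μ) I := by
        intro i hi
        have hi0 := hpos i hi
        simp only [mem_SZ]
        right
        refine ⟨by omega, ?_⟩
        intro heq
        have : i = y := by omega
        exact hyI (this ▸ hi)
      have := hy _ hx
      simp only [mem_SZ] at this; omega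
  · rintro ⟨hy0, hcond⟩ x hx
    have hx0 : x ∈ SZ μ := by
      have := hx 0 (hSI zero_mem_SZ)
      simpa using this
    have hxne : x ≠ 0 := by
      rintro rfl
      apply hne
      apply Set.Subset.antisymm _ hSI
      intro i hi
      have := hx i hi
      simpa using this
    have hxmu : (μ:ℤ) ≤ x ∧ x ≠ 2*(μ:ℤ)-2 := by
      rcases hx0 with h|h
      · exact absurd h hxne
      · exact h
    simp only [mem_SZ]
    right
    refine ⟨by omega, ?_⟩
    intro heq
    have hyI : y ∈ I := hcond (by omega) (by omega)
    have := hx y hyI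
    simp only [mem_SZ] at this
    omega

lemma M1_ne_SZ (hμ : 3 ≤ μ) : M1 μ ≠ SZ μ := by
  have h3 : (3:ℤ) ≤ (μ:ℤ) := by exact_mod_cast hμ
  intro h
  have : ((μ:ℤ)-1) ∈ SZ μ := h ▸ (Set.mem_insert _ _)
  simp only [mem_SZ] at this; omega

lemma Amax_bound (hA : A ⊆ Amax μ) {a : ℤ} (ha : a ∈ A) : 1 ≤ a ∧ a ≤ (μ:ℤ) - 2 := by
  have := hA ha
  simpa [Amax, Set.mem_Icc] using this

lemma IA_ne_SZ (hμ : 3 ≤ μ) {A : Set ℤ} (hA : A ⊆ Amax μ) : IA μ A ≠ SZ μ := by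
  have h3 : (3:ℤ) ≤ (μ:ℤ) := by exact_mod_cast hμ
  intro h
  have : (2*(μ:ℤ)-2) ∈ SZ μ := h ▸ (Set.mem_insert _ _)
  simp only [mem_SZ] at this; omega

lemma M1_ne_IA (hμ : 3 ≤ μ) {A : Set ℤ} (hA : A ⊆ Amax μ) : M1 μ ≠ IA μ A := by
  have h3 : (3:ℤ) ≤ (μ:ℤ) := by exact_mod_cast hμ
  intro h
  have : ((μ:ℤ)-1) ∈ IA μ A := h ▸ (Set.mem_insert _ _)
  simp only [IA, Set.mem_insert_iff, Set.mem_union, mem_SZ] at this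
  rcases this with h1|h1|h1
  · omega
  · omega
  · have := Amax_bound hA h1; omega

lemma Nrm_M1 (hμ : 3 ≤ μ) : Nrm μ (M1 μ) := by
  have h3 : (3:ℤ) ≤ (μ:ℤ) := by exact_mod_cast hμ
  refine ⟨Set.subset_insert _ _, ?_, ?_⟩
  · intro x hx
    rcases hx with rfl|hx
    · omega
    · exact SZ_nonneg hx
  · intro i hi s hs
    have hs' := hs
    simp only [mem_SZ] at hs'
    rcases hi with rfl|hi
    · rcases hs' with rfl|hs'
      · rw [add_zero]; exact Set.mem_insert _ _
      · right; exact big_mem_SZ hμ (by omega)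
    · right; exact SZ_add hi hs

lemma Nrm_IA (hμ : 3 ≤ μ) {A : Set ℤ} (hA : A ⊆ Amax μ) : Nrm μ (IA μ A) := by
  have h3 : (3:ℤ) ≤ (μ:ℤ) := by exact_mod_cast hμ
  refine ⟨fun x hx => Or.inr (Or.inl hx), ?_, ?_⟩
  · intro x hx
    rcases hx with rfl|hx|hx
    · omega
    · exact SZ_nonneg hx
    · have := Amax_bound hA hx; omega
  · intro i hi s hs
    have hs' := hs
    simp only [mem_SZ] at hs'
    rcases hs' with rfl|hs'
    · simpa using hi
    · rcases hi with rfl|hi|hi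
      · right; left; exact big_mem_SZ hμ (by omega)
      · right; left; exact SZ_add hi hs
      · have hb := Amax_bound hA hi
        by_cases hg : i + s = 2*(μ:ℤ)-2
        · left; exact hg
        · right; left; simp only [mem_SZ]; omega

lemma vM1_eq (hμ : 3 ≤ μ) :
    idealSub (SZ μ) (idealSub (SZ μ) (M1 μ)) = insert (2*(μ:ℤ)-2) (M1 μ) := by
  have h3 : (3:ℤ) ≤ (μ:ℤ) := by exact_mod_cast hμ
  rw [vset_eq hμ (Nrm_M1 hμ) (M1_ne_SZ hμ)]
  ext y
  simp only [Set.mem_setOf_eq, Set.mem_insert_iff, M1, mem_SZ]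
  omega

lemma g_not_mem_M1 (hμ : 3 ≤ μ) : (2*(μ:ℤ)-2) ∉ M1 μ := by
  have h3 : (3:ℤ) ≤ (μ:ℤ) := by exact_mod_cast hμ
  simp only [M1, Set.mem_insert_iff, mem_SZ]
  omega

lemma mu1_not_mem_IA (hμ : 3 ≤ μ) {A : Set ℤ} (hA : A ⊆ Amax μ) : ((μ:ℤ)-1) ∉ IA μ A := by
  have h3 : (3:ℤ) ≤ (μ:ℤ) := by exact_mod_cast hμ
  simp only [IA, Set.mem_insert_iff, Set.mem_union, mem_SZ]
  rintro (h|h|h)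
  · omega
  · omega
  · have := Amax_bound hA h; omega

lemma vIA_eq (hμ : 3 ≤ μ) {A : Set ℤ} (hA : A ⊆ Amax μ) :
    idealSub (SZ μ) (idealSub (SZ μ) (IA μ A)) = insert ((μ:ℤ)-1) (IA μ A) := by
  have h3 : (3:ℤ) ≤ (μ:ℤ) := by exact_mod_cast hμ
  rw [vset_eq hμ (Nrm_IA hμ hA) (IA_ne_SZ hμ hA)]
  ext y
  by_cases hyA : y ∈ A
  · have hb := Amax_bound hA hyA
    simp [Set.mem_setOf_eq, Set.mem_insert_iff, IA, Set.mem_union, mem_SZ, hyA]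
    omega
  · simp [Set.mem_setOf_eq, Set.mem_insert_iff, IA, Set.mem_union, mem_SZ, hyA]
    omega

lemma mem_Nset_of_nondiv (hμ : 3 ≤ μ) {I : Set ℤ} (hI : Nrm μ I) (hne : I ≠ SZ μ)
    (hnd : idealSub (SZ μ) (idealSub (SZ μ) I) ≠ I) : I ∈ Nset μ := by
  obtain ⟨hSI, hpos, hstab⟩ := hI
  have h3 : (3:ℤ) ≤ (μ:ℤ) := by exact_mod_cast hμ
  have hv := vset_eq hμ ⟨hSI, hpos, hstab⟩ hne
  have hg_of : ∀ t ∈ I, 1 ≤ t → t ≤ (μ:ℤ)-2 → 2*(μ:ℤ)-2 ∈ I := by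
    intro t ht h1 h2
    have hs : (2*(μ:ℤ)-2-t) ∈ SZ μ := by simp only [mem_SZ]; omega
    have := hstab t ht _ hs
    have e : t + (2*(μ:ℤ)-2-t) = 2*(μ:ℤ)-2 := by ring
    rwa [e] at this
  by_cases hgI : 2*(μ:ℤ)-2 ∈ I
  · right
    refine ⟨I ∩ Amax μ, Set.inter_subset_right, ?_⟩
    have hmu1 : (μ:ℤ)-1 ∉ I := by
      intro hm
      apply hnd
      rw [hv]
      ext y
      simp only [Set.mem_setOf_eq]
      constructor
      · rintro ⟨h0, hc⟩
        by_cases h1 : 1 ≤ y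
        · by_cases h2 : y ≤ (μ:ℤ)-2
          · exact hc h1 h2
          · by_cases hy : y = (μ:ℤ)-1
            · exact hy ▸ hm
            · by_cases hyg : y = 2*(μ:ℤ)-2
              · exact hyg ▸ hgI
              · exact hSI (by simp only [mem_SZ]; omega)
        · have hy0 : y = 0 := by omega
          exact hy0 ▸ hSI zero_mem_SZ
      · intro hyI
        exact ⟨hpos y hyI, fun _ _ => hyI⟩
    ext x
    simp only [IA, Set.mem_insert_iff, Set.mem_union, Set.mem_inter_iff, Amax, Set.mem_Icc]
    constructor
    · intro hx
      have h0 := hpos x hx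
      by_cases hc : 1 ≤ x ∧ x ≤ (μ:ℤ)-2
      · right; right; exact ⟨hx, hc.1, hc.2⟩
      · by_cases hxg : x = 2*(μ:ℤ)-2
        · left; exact hxg
        · right; left
          have hxm : x ≠ (μ:ℤ)-1 := fun h => hmu1 (h ▸ hx)
          simp only [mem_SZ]; omega
    · rintro (rfl|hx|⟨hx,_,_⟩)
      · exact hgI
      · exact hSI hx
      · exact hx
  · left
    have hnot : ∀ t ∈ I, ¬(1 ≤ t ∧ t ≤ (μ:ℤ)-2) := by
      rintro t ht ⟨h1,h2⟩
      exact hgI (hg_of t ht h1 h2)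
    have hmu1 : (μ:ℤ)-1 ∈ I := by
      by_contra hm
      apply hne
      apply Set.Subset.antisymm _ hSI
      intro x hx
      have h0 := hpos x hx
      have hn := hnot x hx
      have hxm : x ≠ (μ:ℤ)-1 := fun h => hm (h ▸ hx)
      have hxg : x ≠ 2*(μ:ℤ)-2 := fun h => hgI (h ▸ hx)
      simp only [mem_SZ]; omega
    ext x
    simp only [M1, Set.mem_insert_iff]
    constructor
    · intro hx
      have h0 := hpos x hx
      have hn := hnot x hx
      have hxg : x ≠ 2*(μ:ℤ)-2 := fun h => hgI (h ▸ hx)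
      by_cases hxm : x = (μ:ℤ)-1
      · left; exact hxm
      · right; simp only [mem_SZ]; omega
    · rintro (rfl|hx)
      · exact hmu1
      · exact hSI hx

end CardStarAux
namespace CardStarAux

def kills (μ : ℕ) (K I : Set ℤ) : Prop :=
  ¬ (idealSub (SZ μ) (idealSub (SZ μ) I) ⊆ idealSub K (idealSub K I))

def Adm (μ : ℕ) (Γ : Set (Set ℤ)) : Prop :=
  Γ ⊆ Nset μ ∧ ∀ I ∈ Nset μ, (∃ K ∈ Γ, kills μ K I) → I ∈ Γ

variable {μ : ℕ}

lemma kills_iff {I K : Set ℤ} {e : ℤ}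
    (hv : idealSub (SZ μ) (idealSub (SZ μ) I) = insert e I) :
    kills μ K I ↔ ∃ x, (∀ i ∈ I, x + i ∈ K) ∧ x + e ∉ K := by
  unfold kills
  rw [hv]
  constructor
  · intro h
    by_cases he : e ∈ idealSub K (idealSub K I)
    · exact absurd (Set.insert_subset he subset_idealSub_idealSub) h
    · rw [mem_idealSub] at he
      push_neg at he
      obtain ⟨x, hx, hxe⟩ := he
      exact ⟨x, hx, by rwa [add_comm]⟩
  · rintro ⟨x, hx, hxe⟩ hsub
    exact hxe (by rw [add_comm]; exact hsub (Set.mem_insert _ _) x hx)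

lemma zero_mem_IA {A : Set ℤ} : (0:ℤ) ∈ IA μ A := Or.inr (Or.inl zero_mem_SZ)

lemma kills_M1 (hμ : 3 ≤ μ) {I : Set ℤ} (hI : I ∈ Nset μ) : kills μ (M1 μ) I := by
  have h3 : (3:ℤ) ≤ (μ:ℤ) := by exact_mod_cast hμ
  rcases hI with rfl|⟨A, hA, rfl⟩
  · rw [kills_iff (vM1_eq hμ)]
    refine ⟨0, fun i hi => by simpa using hi, by simpa using g_not_mem_M1 hμ⟩
  · rw [kills_iff (vIA_eq hμ hA)]
    refine ⟨(μ:ℤ)-1, ?_, ?_⟩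
    · rintro i (rfl|hi|hi)
      · right; exact big_mem_SZ hμ (by omega)
      · rcases hi with rfl|hi
        · rw [add_zero]; exact Set.mem_insert _ _
        · right; exact big_mem_SZ hμ (by omega)
      · have hb := Amax_bound hA hi
        right; simp only [mem_SZ]; omega
    · have e : (μ:ℤ)-1 + ((μ:ℤ)-1) = 2*(μ:ℤ)-2 := by ring
      rw [e]; exact g_not_mem_M1 hμ

lemma not_kills_IA_M1 (hμ : 3 ≤ μ) {B : Set ℤ} (hB : B ⊆ Amax μ) :
    ¬ kills μ (IA μ B) (M1 μ) := by
  have h3 : (3:ℤ) ≤ (μ:ℤ) := by exact_mod_cast hμ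
  rw [kills_iff (vM1_eq hμ)]
  push_neg
  intro x hx
  have hx0 : (0:ℤ) ≤ x := by
    have := hx 0 (Or.inr zero_mem_SZ)
    rw [add_zero] at this
    exact (Nrm_IA hμ hB).2.1 x this
  rcases lt_or_eq_of_le hx0 with h1|h1
  · right; left; exact big_mem_SZ hμ (by omega)
  · exfalso
    have := hx ((μ:ℤ)-1) (Set.mem_insert _ _)
    rw [← h1, zero_add] at this
    exact mu1_not_mem_IA hμ hB this

lemma kills_IA_IA (hμ : 3 ≤ μ) {A B : Set ℤ} (hA : A ⊆ Amax μ) (hB : B ⊆ Amax μ) :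
    kills μ (IA μ B) (IA μ A) ↔ A ⊆ B := by
  have h3 : (3:ℤ) ≤ (μ:ℤ) := by exact_mod_cast hμ
  rw [kills_iff (vIA_eq hμ hA)]
  constructor
  · rintro ⟨x, hx, hxe⟩
    have hx0 : (0:ℤ) ≤ x := by
      have := hx 0 zero_mem_IA
      rw [add_zero] at this
      exact (Nrm_IA hμ hB).2.1 x this
    have hx1 : x = 0 := by
      by_contra hne
      apply hxe
      by_cases hg : x + ((μ:ℤ)-1) = 2*(μ:ℤ)-2
      · rw [hg]; exact Set.mem_insert _ _
      · right; left; simp only [mem_SZ]; omega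
    subst hx1
    intro a ha
    have hai := hx a (Or.inr (Or.inr ha))
    rw [zero_add] at hai
    have hb := Amax_bound hA ha
    rcases hai with h|h|h
    · omega
    · simp only [mem_SZ] at h; omega
    · exact h
  · intro hAB
    refine ⟨0, ?_, ?_⟩
    · rintro i (rfl|hi|hi)
      · rw [zero_add]; exact Set.mem_insert _ _
      · rw [zero_add]; exact Or.inr (Or.inl hi)
      · rw [zero_add]; exact Or.inr (Or.inr (hAB hi))
    · rw [zero_add]; exact mu1_not_mem_IA hμ hB

end CardStarAux
namespace CardStarAux

open Set

variable {μ : ℕ}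

lemma idealSub_idealSub_self (K : Set ℤ) : idealSub K (idealSub K K) = K := by
  apply Set.Subset.antisymm
  · intro x hx
    have h0 : (0:ℤ) ∈ idealSub K K := fun j hj => by simpa using hj
    simpa using hx 0 h0
  · exact subset_idealSub_idealSub

lemma vOp_eq (S : NumSgp) (hT : natS S = SZ μ) (J : Set ℤ) :
    vOp S J = idealSub (SZ μ) (idealSub (SZ μ) J) := by rw [vOp, hT]

lemma vOp_mono (S : NumSgp) {J J' : Set ℤ} (h : J ⊆ J') : vOp S J ⊆ vOp S J' :=
  idealSub_anti _ (idealSub_anti _ h)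

lemma vOp_idem (S : NumSgp) (J : Set ℤ) : vOp S (vOp S J) = vOp S J := by
  unfold vOp
  rw [idealSub_idealSub_idealSub]

lemma subset_vOp (S : NumSgp) (J : Set ℤ) : J ⊆ vOp S J := subset_idealSub_idealSub

lemma frac_of_Nrm {S : NumSgp} (hT : natS S = SZ μ) {I : Set ℤ} (hN : Nrm μ I) :
    IsFracIdeal S I := by
  refine ⟨⟨0, hN.1 zero_mem_SZ⟩, ⟨0, fun x hx => hN.2.1 x hx⟩, ?_⟩
  rw [hT]; exact hN.2.2

lemma Nrm_Nset (hμ : 3 ≤ μ) {I : Set ℤ} (hI : I ∈ Nset μ) : Nrm μ I := by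
  rcases hI with rfl|⟨A, hA, rfl⟩
  · exact Nrm_M1 hμ
  · exact Nrm_IA hμ hA

lemma Nset_v (hμ : 3 ≤ μ) {I : Set ℤ} (hI : I ∈ Nset μ) :
    ∃ e, idealSub (SZ μ) (idealSub (SZ μ) I) = insert e I ∧ e ∉ I := by
  rcases hI with rfl|⟨A, hA, rfl⟩
  · exact ⟨_, vM1_eq hμ, g_not_mem_M1 hμ⟩
  · exact ⟨_, vIA_eq hμ hA, mu1_not_mem_IA hμ hA⟩

lemma kills_elt {I K : Set ℤ} {e : ℤ}
    (hv : idealSub (SZ μ) (idealSub (SZ μ) I) = insert e I)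
    (hk : kills μ K I) : e ∉ idealSub K (idealSub K I) := by
  intro he
  exact hk (hv ▸ Set.insert_subset he subset_idealSub_idealSub)

lemma frac_translate {S : NumSgp} {J : Set ℤ} (a : ℤ) (hJ : IsFracIdeal S J) :
    IsFracIdeal S ((fun y => a + y) '' J) := by
  obtain ⟨⟨j0, hj0⟩, ⟨b, hb⟩, hst⟩ := hJ
  refine ⟨⟨a + j0, ⟨j0, hj0, rfl⟩⟩, ⟨a + b, ?_⟩, ?_⟩
  · rintro x ⟨j, hj, rfl⟩
    have := hb hj; show a + b ≤ a + j; omega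
  · rintro i ⟨j, hj, rfl⟩ s hs
    exact ⟨j + s, hst j hj s hs, by ring⟩

lemma frac_translate_iff {S : NumSgp} {J : Set ℤ} (a : ℤ) :
    IsFracIdeal S ((fun y => a + y) '' J) ↔ IsFracIdeal S J := by
  constructor
  · intro h
    have := frac_translate (-a) h
    rwa [translate_translate, neg_add_cancel, translate_zero] at this
  · exact frac_translate a

lemma frac_min {S : NumSgp} {J : Set ℤ} (hJ : IsFracIdeal S J) :
    ∃ m ∈ J, ∀ j ∈ J, m ≤ j := by
  obtain ⟨⟨j0, hj0⟩, ⟨b, hb⟩, _⟩ := hJ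
  obtain ⟨m, hm, hmin⟩ := Int.exists_least_of_bdd (P := (· ∈ J)) ⟨b, fun z hz => hb hz⟩ ⟨j0, hj0⟩
  exact ⟨m, hm, hmin⟩

lemma Nrm_of_min0 {S : NumSgp} (hT : natS S = SZ μ) {J : Set ℤ} (hJ : IsFracIdeal S J)
    (h0 : 0 ∈ J) (hpos : ∀ j ∈ J, 0 ≤ j) : Nrm μ J := by
  refine ⟨?_, hpos, ?_⟩
  · intro s hs
    have := hJ.2.2 0 h0 s (by rw [hT]; exact hs)
    simpa using this
  · intro i hi s hs
    exact hJ.2.2 i hi s (by rw [hT]; exact hs)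

lemma frac_natS (S : NumSgp) (hT : natS S = SZ μ) : IsFracIdeal S (natS S) := by
  rw [hT]
  exact frac_of_Nrm hT Nrm_SZ

/-- any star operation is bounded by the `v`-operation -/
lemma star_le_v {S : NumSgp} (hT : natS S = SZ μ) (s : StarOp S) {J : Set ℤ}
    (hJ : IsFracIdeal S J) : s.toFun J ⊆ vOp S J := by
  intro z hz y hy
  have hsub : J ⊆ (fun x => -y + x) '' (natS S) := by
    intro j hj
    exact ⟨y + j, hy j hj, by ring⟩
  have hfr : IsFracIdeal S ((fun x => -y + x) '' (natS S)) :=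
    frac_translate _ (frac_natS S hT)
  have := s.mono J _ hJ hfr hsub
  have hz2 := this hz
  rw [s.transl _ (frac_natS S hT), s.star_S] at hz2
  rw [mem_translate] at hz2
  have e : z - -y = z + y := by ring
  rwa [e] at hz2

/-- a star operation's value is contained in any closed translate -/
lemma star_le_closed {S : NumSgp} {s : StarOp S} {J K : Set ℤ}
    (hJ : IsFracIdeal S J) (hK : IsFracIdeal S K) (hKfix : s.toFun K = K) :
    s.toFun J ⊆ idealSub K (idealSub K J) := by
  intro z hz x hx
  have hsub : J ⊆ (fun y => -x + y) '' K := by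
    intro j hj
    exact ⟨x + j, hx j hj, by ring⟩
  have hfr : IsFracIdeal S ((fun y => -x + y) '' K) := frac_translate _ hK
  have := s.mono J _ hJ hfr hsub hz
  rw [s.transl _ hK, hKfix, mem_translate] at this
  have e : z - -x = z + x := by ring
  rwa [e] at this

lemma subset_starD (S : NumSgp) (Δ : Set (Set ℤ)) (J : Set ℤ) : J ⊆ starD S Δ J := by
  intro j hj
  refine ⟨subset_vOp S J hj, ?_⟩
  simp only [Set.mem_iInter]
  intro K _
  exact subset_idealSub_idealSub hj

lemma starD_subset_vOp (S : NumSgp) (Δ : Set (Set ℤ)) (J : Set ℤ) :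
    starD S Δ J ⊆ vOp S J := Set.inter_subset_left

lemma starD_subset_comp (S : NumSgp) {Δ : Set (Set ℤ)} {K : Set ℤ} (hK : K ∈ Δ) (J : Set ℤ) :
    starD S Δ J ⊆ idealSub K (idealSub K J) := by
  intro z hz
  have := hz.2
  simp only [Set.mem_iInter] at this
  exact this K hK

lemma starD_mono (S : NumSgp) (Δ : Set (Set ℤ)) {J J' : Set ℤ} (h : J ⊆ J') :
    starD S Δ J ⊆ starD S Δ J' := by
  intro z hz
  refine ⟨vOp_mono S h hz.1, ?_⟩
  have := hz.2
  simp only [Set.mem_iInter] at this ⊢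
  intro K hK
  exact idealSub_anti _ (idealSub_anti _ h) (this K hK)

lemma starD_idem (S : NumSgp) (Δ : Set (Set ℤ)) (J : Set ℤ) :
    starD S Δ (starD S Δ J) = starD S Δ J := by
  apply Set.Subset.antisymm
  · intro z hz
    constructor
    · have h1 : starD S Δ J ⊆ vOp S J := starD_subset_vOp S Δ J
      have := vOp_mono S h1 hz.1
      rwa [vOp_idem] at this
    · simp only [Set.mem_iInter]
      intro K hK
      have h1 : starD S Δ J ⊆ idealSub K (idealSub K J) := starD_subset_comp S hK J
      have h2 := hz.2
      simp only [Set.mem_iInter] at h2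
      have h3 := h2 K hK
      have h4 : idealSub K (idealSub K (starD S Δ J)) ⊆
          idealSub K (idealSub K (idealSub K (idealSub K J))) :=
        idealSub_anti _ (idealSub_anti _ h1)
      have h5 := h4 h3
      rw [show idealSub K (idealSub K (idealSub K (idealSub K J)))
            = idealSub K (idealSub K J) by rw [idealSub_idealSub_idealSub]] at h5
      exact h5
  · exact subset_starD S Δ (starD S Δ J)

lemma translate_inter (a : ℤ) (X Y : Set ℤ) :
    (fun y => a + y) '' (X ∩ Y) = ((fun y => a + y) '' X) ∩ ((fun y => a + y) '' Y) := by
  ext x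
  simp only [mem_translate, Set.mem_inter_iff, mem_translate]

lemma translate_iInter₂ (a : ℤ) (Δ : Set (Set ℤ)) (f : Set ℤ → Set ℤ) :
    (fun y => a + y) '' (⋂ K ∈ Δ, f K) = ⋂ K ∈ Δ, (fun y => a + y) '' f K := by
  ext x
  simp only [mem_translate, Set.mem_iInter, mem_translate]

lemma starD_translate (S : NumSgp) (Δ : Set (Set ℤ)) (a : ℤ) (J : Set ℤ) :
    starD S Δ ((fun y => a + y) '' J) = (fun y => a + y) '' starD S Δ J := by
  unfold starD
  rw [vOp_translate, translate_inter, translate_iInter₂]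
  congr 1
  apply Set.iInter_congr
  intro K
  apply Set.iInter_congr
  intro _
  rw [idealSub_translate_right, idealSub_translate_right, neg_neg]

lemma starD_frac {S : NumSgp} (hμ : 3 ≤ μ) (hT : natS S = SZ μ) {Δ : Set (Set ℤ)}
    (hΔ : Δ ⊆ Nset μ) {J : Set ℤ} (hJ : IsFracIdeal S J) : IsFracIdeal S (starD S Δ J) := by
  obtain ⟨m, hm, hmin⟩ := frac_min hJ
  refine ⟨⟨m, subset_starD S Δ J hm⟩, ?_, ?_⟩
  · -- bounded below
    have hy : (2*(μ:ℤ) - 1 - m) ∈ idealSub (natS S) J := by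
      intro j hj
      rw [hT]
      exact big_mem_SZ hμ (by have := hmin j hj; omega)
    refine ⟨-(2*(μ:ℤ) - 1 - m), ?_⟩
    intro z hz
    have := (starD_subset_vOp S Δ J) hz _ hy
    rw [hT] at this
    have := SZ_nonneg this
    omega
  · intro i hi s hs
    have hsSZ : s ∈ SZ μ := by rw [← hT]; exact hs
    constructor
    · intro x hx
      have h1 := hi.1 x hx
      rw [hT] at h1 ⊢
      have e : i + s + x = (i + x) + s := by ring
      rw [e]
      exact SZ_add h1 hsSZ
    · simp only [Set.mem_iInter]
      intro K hK
      intro x hx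
      have h2 := hi.2
      simp only [Set.mem_iInter] at h2
      have h1 := h2 K hK x hx
      have hNr := Nrm_Nset hμ (hΔ hK)
      have e : i + s + x = (i + x) + s := by ring
      rw [e]
      exact hNr.2.2 _ h1 s hsSZ

lemma starD_natS (S : NumSgp) (hT : natS S = SZ μ) (Δ : Set (Set ℤ)) :
    starD S Δ (natS S) = natS S := by
  apply Set.Subset.antisymm
  · intro z hz
    have := hz.1
    rw [vOp_eq S hT, hT, idealSub_SZ_SZ, idealSub_SZ_SZ] at this
    rwa [hT]
  · exact subset_starD S Δ (natS S)

lemma starD_self (S : NumSgp) {Δ : Set (Set ℤ)} {K : Set ℤ} (hK : K ∈ Δ) :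
    starD S Δ K = K :=
  Set.Subset.antisymm
    (fun z hz => by
      have := starD_subset_comp S hK K hz
      rwa [idealSub_idealSub_self] at this)
    (subset_starD S Δ K)

open scoped Classical in
noncomputable def mkFun (S : NumSgp) (Δ : Set (Set ℤ)) (J : Set ℤ) : Set ℤ :=
  if IsFracIdeal S J then starD S Δ J else J

lemma mkFun_pos {S : NumSgp} {Δ : Set (Set ℤ)} {J : Set ℤ} (hJ : IsFracIdeal S J) :
    mkFun S Δ J = starD S Δ J := if_pos hJ

lemma mkFun_neg {S : NumSgp} {Δ : Set (Set ℤ)} {J : Set ℤ} (hJ : ¬ IsFracIdeal S J) :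
    mkFun S Δ J = J := if_neg hJ

/-- the star operation generated by a family of normalized nondivisorial ideals -/
noncomputable def mkStar (S : NumSgp) (μ : ℕ) (hμ : 3 ≤ μ) (hT : natS S = SZ μ)
    (Δ : Set (Set ℤ)) (hΔ : Δ ⊆ Nset μ) : StarOp S where
  toFun := mkFun S Δ
  isFrac J hJ := by rw [mkFun_pos hJ]; exact starD_frac hμ hT hΔ hJ
  subset_star J hJ := by rw [mkFun_pos hJ]; exact subset_starD S Δ J
  mono I J hI hJ h := by rw [mkFun_pos hI, mkFun_pos hJ]; exact starD_mono S Δ h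
  idem J hJ := by
    rw [mkFun_pos hJ, mkFun_pos (starD_frac hμ hT hΔ hJ)]
    exact starD_idem S Δ J
  transl J hJ a := by
    rw [mkFun_pos hJ, mkFun_pos ((frac_translate_iff a).mpr hJ)]
    exact starD_translate S Δ a J
  star_S := by
    rw [mkFun_pos (frac_natS S hT)]
    exact starD_natS S hT Δ
  default_eq J hJ := mkFun_neg hJ

end CardStarAux
namespace CardStarAux

variable {μ : ℕ}

lemma StarOp.ext' {S : NumSgp} {s t : StarOp S} (h : s.toFun = t.toFun) : s = t := by
  cases s; cases t; simpa using h

def SigmaOf {S : NumSgp} (μ : ℕ) (s : StarOp S) : Set (Set ℤ) :=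
  {I | I ∈ Nset μ ∧ s.toFun I = I}

lemma SigmaOf_adm {S : NumSgp} (hμ : 3 ≤ μ) (hT : natS S = SZ μ) (s : StarOp S) :
    Adm μ (SigmaOf μ s) := by
  refine ⟨fun I hI => hI.1, ?_⟩
  rintro I hIN ⟨K, ⟨hKN, hKfix⟩, hkill⟩
  refine ⟨hIN, ?_⟩
  obtain ⟨e, hv, he⟩ := Nset_v hμ hIN
  have hIfr : IsFracIdeal S I := frac_of_Nrm hT (Nrm_Nset hμ hIN)
  have hKfr : IsFracIdeal S K := frac_of_Nrm hT (Nrm_Nset hμ hKN)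
  apply Set.Subset.antisymm
  · intro z hz
    have h1 : z ∈ vOp S I := star_le_v hT s hIfr hz
    rw [vOp_eq S hT, hv] at h1
    have h2 : z ∈ idealSub K (idealSub K I) := star_le_closed hIfr hKfr hKfix hz
    rcases h1 with rfl|h1
    · exact absurd h2 (kills_elt hv hkill)
    · exact h1
  · exact s.subset_star I hIfr

lemma mkStar_fix_iff {S : NumSgp} (hμ : 3 ≤ μ) (hT : natS S = SZ μ)
    {Δ : Set (Set ℤ)} (hΔ : Adm μ Δ) {I : Set ℤ} (hIN : I ∈ Nset μ) :
    (mkStar S μ hμ hT Δ hΔ.1).toFun I = I ↔ I ∈ Δ := by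
  have hIfr : IsFracIdeal S I := frac_of_Nrm hT (Nrm_Nset hμ hIN)
  have hfun : (mkStar S μ hμ hT Δ hΔ.1).toFun I = starD S Δ I := mkFun_pos hIfr
  rw [hfun]
  constructor
  · intro hfix
    apply hΔ.2 I hIN
    by_contra hno
    push_neg at hno
    obtain ⟨e, hv, he⟩ := Nset_v hμ hIN
    have hevI : e ∈ idealSub (SZ μ) (idealSub (SZ μ) I) := by
      rw [hv]; exact Set.mem_insert _ _
    have heIn : e ∈ starD S Δ I := by
      constructor
      · rw [vOp_eq S hT]; exact hevI
      · simp only [Set.mem_iInter]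
        intro K hK
        have hnk := hno K hK
        unfold kills at hnk
        push_neg at hnk
        exact hnk hevI
    rw [hfix] at heIn
    exact he heIn
  · intro hI
    exact starD_self S hI

lemma mkStar_sigmaOf {S : NumSgp} (hμ : 3 ≤ μ) (hT : natS S = SZ μ) (s : StarOp S) :
    mkStar S μ hμ hT (SigmaOf μ s) (SigmaOf_adm hμ hT s).1 = s := by
  apply StarOp.ext'
  funext J
  show mkFun S (SigmaOf μ s) J = s.toFun J
  by_cases hJ : IsFracIdeal S J
  · rw [mkFun_pos hJ]
    apply Set.Subset.antisymm
    · have hsJ : IsFracIdeal S (s.toFun J) := s.isFrac J hJ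
      obtain ⟨m, hm, hmin⟩ := frac_min hsJ
      set I0 := (fun y => -m + y) '' s.toFun J with hI0
      have hI0fr : IsFracIdeal S I0 := frac_translate _ hsJ
      have hback : (fun y => m + y) '' I0 = s.toFun J := by
        rw [hI0, translate_translate, add_neg_cancel, translate_zero]
      have h0mem : (0:ℤ) ∈ I0 := ⟨m, hm, by ring⟩
      have hpos : ∀ j ∈ I0, 0 ≤ j := by
        rintro j ⟨z, hz, rfl⟩
        show (0:ℤ) ≤ -m + z
        have := hmin z hz; omega
      have hNrm : Nrm μ I0 := Nrm_of_min0 hT hI0fr h0mem hpos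
      have hclosed : s.toFun I0 = I0 := by
        rw [hI0, s.transl _ hsJ, s.idem J hJ]
      by_cases hdiv : idealSub (SZ μ) (idealSub (SZ μ) I0) = I0
      · have hvJ : vOp S (s.toFun J) = s.toFun J := by
          rw [← hback, vOp_translate, vOp_eq S hT, hdiv]
        intro z hz
        have h1 : z ∈ vOp S J := (starD_subset_vOp S _ J) hz
        have h2 := vOp_mono S (s.subset_star J hJ) h1
        rwa [hvJ] at h2
      · have hne : I0 ≠ SZ μ := by
          intro h
          apply hdiv
          rw [h, idealSub_SZ_SZ, idealSub_SZ_SZ]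
        have hI0N : I0 ∈ Nset μ := mem_Nset_of_nondiv hμ hNrm hne hdiv
        have hI0S : I0 ∈ SigmaOf μ s := ⟨hI0N, hclosed⟩
        intro z hz
        have h1 := starD_subset_comp S hI0S J hz
        have hmem : (-m) ∈ idealSub I0 J := by
          intro j hj
          exact ⟨j, s.subset_star J hJ hj, rfl⟩
        have h2 := h1 (-m) hmem
        obtain ⟨w, hw, hwe⟩ := h2
        have hwe' : -m + w = z + -m := hwe
        have hwz : w = z := by omega
        rwa [hwz] at hw
    · intro z hz
      constructor
      · exact star_le_v hT s hJ hz
      · simp only [Set.mem_iInter]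
        rintro K ⟨hKN, hKfix⟩
        exact star_le_closed hJ (frac_of_Nrm hT (Nrm_Nset hμ hKN)) hKfix hz
  · rw [mkFun_neg hJ, s.default_eq J hJ]

noncomputable def starEquiv (S : NumSgp) (hμ : 3 ≤ μ) (hT : natS S = SZ μ) :
    StarOp S ≃ {Γ : Set (Set ℤ) // Adm μ Γ} where
  toFun s := ⟨SigmaOf μ s, SigmaOf_adm hμ hT s⟩
  invFun Γ := mkStar S μ hμ hT Γ.1 Γ.2.1
  left_inv s := mkStar_sigmaOf hμ hT s
  right_inv Γ := by
    apply Subtype.ext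
    ext I
    simp only [SigmaOf, Set.mem_setOf_eq]
    constructor
    · rintro ⟨hIN, hfix⟩
      exact (mkStar_fix_iff hμ hT Γ.2 hIN).mp hfix
    · intro hI
      have hIN := Γ.2.1 hI
      exact ⟨hIN, (mkStar_fix_iff hμ hT Γ.2 hIN).mpr hI⟩

end CardStarAux
namespace CardStarAux

variable {μ : ℕ}

def decode (μ : ℕ) (B : Set (Fin (μ-2))) : Set ℤ := {x | ∃ i ∈ B, x = (i:ℤ) + 1}
def encode (μ : ℕ) (A : Set ℤ) : Set (Fin (μ-2)) := {i | ((i:ℤ) + 1) ∈ A}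

lemma decode_sub (hμ : 3 ≤ μ) (B : Set (Fin (μ-2))) : decode μ B ⊆ Amax μ := by
  rintro x ⟨i, _, rfl⟩
  have hi : (i:ℕ) < μ - 2 := i.isLt
  simp only [Amax, Set.mem_Icc]
  omega

lemma decode_mono {B B' : Set (Fin (μ-2))} (h : B ⊆ B') : decode μ B ⊆ decode μ B' := by
  rintro x ⟨i, hi, rfl⟩
  exact ⟨i, h hi, rfl⟩

lemma encode_mono {A A' : Set ℤ} (h : A ⊆ A') : encode μ A ⊆ encode μ A' :=
  fun _ hi => h hi

lemma encode_decode (B : Set (Fin (μ-2))) : encode μ (decode μ B) = B := by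
  ext i
  simp only [encode, decode, Set.mem_setOf_eq]
  constructor
  · rintro ⟨i', hi', he⟩
    have : (i:ℕ) = (i':ℕ) := by omega
    rwa [show i = i' from Fin.ext this]
  · intro hi
    exact ⟨i, hi, rfl⟩

lemma decode_encode (hμ : 3 ≤ μ) {A : Set ℤ} (hA : A ⊆ Amax μ) :
    decode μ (encode μ A) = A := by
  ext x
  simp only [decode, encode, Set.mem_setOf_eq]
  constructor
  · rintro ⟨i, hi, rfl⟩
    exact hi
  · intro hx
    have hb := Amax_bound hA hx
    have hlt : (x - 1).toNat < μ - 2 := by omega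
    refine ⟨⟨(x-1).toNat, hlt⟩, ?_, ?_⟩
    · show (((x-1).toNat : ℕ) : ℤ) + 1 ∈ A
      have he : (((x-1).toNat : ℕ) : ℤ) + 1 = x := by omega
      rw [he]; exact hx
    · show x = (((x-1).toNat : ℕ) : ℤ) + 1
      omega

lemma IA_inj (hμ : 3 ≤ μ) {A A' : Set ℤ} (hA : A ⊆ Amax μ) (hA' : A' ⊆ Amax μ)
    (h : IA μ A = IA μ A') : A = A' := by
  have h3 : (3:ℤ) ≤ (μ:ℤ) := by exact_mod_cast hμ
  have key : ∀ A₁ A₂ : Set ℤ, A₁ ⊆ Amax μ → A₂ ⊆ Amax μ → IA μ A₁ = IA μ A₂ → A₁ ⊆ A₂ := by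
    intro A₁ A₂ h₁ h₂ he a ha
    have hb := Amax_bound h₁ ha
    have : a ∈ IA μ A₂ := he ▸ (Or.inr (Or.inr ha))
    rcases this with h'|h'|h'
    · omega
    · simp only [mem_SZ] at h'; omega
    · exact h'
  exact Set.Subset.antisymm (key A A' hA hA' h) (key A' A hA' hA h.symm)

lemma M1_mem_Nset : M1 μ ∈ Nset μ := Or.inl rfl

lemma IA_mem_Nset {A : Set ℤ} (hA : A ⊆ Amax μ) : IA μ A ∈ Nset μ :=
  Or.inr ⟨A, hA, rfl⟩

open scoped Classical in
noncomputable def admEquiv (hμ : 3 ≤ μ) :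
    {Γ : Set (Set ℤ) // Adm μ Γ} ≃ Option {D : Set (Set (Fin (μ-2))) // IsLowerSet D} where
  toFun Γ :=
    if hM : M1 μ ∈ Γ.1 then none
    else some ⟨{B | IA μ (decode μ B) ∈ Γ.1}, by
      intro B B' hle hB
      simp only [Set.mem_setOf_eq] at hB ⊢
      apply Γ.2.2 _ (IA_mem_Nset (decode_sub hμ B'))
      exact ⟨IA μ (decode μ B), hB,
        (kills_IA_IA hμ (decode_sub hμ B') (decode_sub hμ B)).mpr (decode_mono hle)⟩⟩
  invFun o :=
    match o with
    | none => ⟨Nset μ, le_refl _, fun I hI _ => hI⟩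
    | some D => ⟨{I | ∃ B ∈ D.1, I = IA μ (decode μ B)}, by
        rintro I ⟨B, _, rfl⟩
        exact IA_mem_Nset (decode_sub hμ B), by
        rintro I hIN ⟨K, ⟨B, hB, rfl⟩, hk⟩
        rcases hIN with rfl|⟨A, hA, rfl⟩
        · exact absurd hk (not_kills_IA_M1 hμ (decode_sub hμ B))
        · have hsub : A ⊆ decode μ B :=
            (kills_IA_IA hμ hA (decode_sub hμ B)).mp hk
          have hmem : encode μ A ∈ D.1 := by
            apply D.2 _ hB
            show encode μ A ⊆ B
            rw [← encode_decode B]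
            exact encode_mono hsub
          exact ⟨encode μ A, hmem, by rw [decode_encode hμ hA]⟩⟩
  left_inv Γ := by
    by_cases hM : M1 μ ∈ Γ.1
    · simp only [dif_pos hM]
      apply Subtype.ext
      show Nset μ = Γ.1
      apply Set.Subset.antisymm
      · intro I hIN
        exact Γ.2.2 I hIN ⟨M1 μ, hM, kills_M1 hμ hIN⟩
      · exact Γ.2.1
    · simp only [dif_neg hM]
      apply Subtype.ext
      show {I | ∃ B ∈ {B | IA μ (decode μ B) ∈ Γ.1}, I = IA μ (decode μ B)} = Γ.1
      ext I
      simp only [Set.mem_setOf_eq]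
      constructor
      · rintro ⟨B, hB, rfl⟩
        exact hB
      · intro hI
        rcases Γ.2.1 hI with rfl|⟨A, hA, rfl⟩
        · exact absurd hI hM
        · exact ⟨encode μ A, by rw [decode_encode hμ hA]; exact hI,
            by rw [decode_encode hμ hA]⟩
  right_inv o := by
    match o with
    | none => simp only [dif_pos M1_mem_Nset]
    | some D =>
      have hM : M1 μ ∉ {I | ∃ B ∈ D.1, I = IA μ (decode μ B)} := by
        rintro ⟨B, _, hBe⟩
        exact M1_ne_IA hμ (decode_sub hμ B) hBe
      simp only [dif_neg hM]
      congr 1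
      apply Subtype.ext
      ext B
      simp only [Set.mem_setOf_eq]
      constructor
      · rintro ⟨B', hB', he⟩
        have : decode μ B = decode μ B' :=
          IA_inj hμ (decode_sub hμ B) (decode_sub hμ B') he
        have hBB : B = B' := by
          rw [← encode_decode B, ← encode_decode B', this]
        rwa [hBB]
      · intro hB
        exact ⟨B, hB, rfl⟩

/-- lower sets and antichains of a finite boolean lattice are equinumerous -/
noncomputable def lowerAntichainEquiv (n : ℕ) :
    {D : Set (Set (Fin n)) // IsLowerSet D} ≃
      {A : Set (Set (Fin n)) // IsAntichain (· ⊆ ·) A} where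
  toFun D := ⟨{x | x ∈ D.1 ∧ ∀ y ∈ D.1, x ⊆ y → x = y}, by
    rintro a ⟨ha, hamax⟩ b ⟨hb, hbmax⟩ hne hab
    exact hne (hamax b hb hab)⟩
  invFun A := ⟨{x | ∃ a ∈ A.1, x ⊆ a}, by
    rintro a b hle ⟨c, hc, hac⟩
    exact ⟨c, hc, le_trans hle hac⟩⟩
  left_inv D := by
    apply Subtype.ext
    ext x
    simp only [Set.mem_setOf_eq]
    constructor
    · rintro ⟨m, ⟨hm, _⟩, hxm⟩
      exact D.2 hxm hm
    · intro hx
      obtain ⟨b, hxb, hb⟩ := Finite.exists_le_maximal hx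
      refine ⟨b, ⟨hb.1, ?_⟩, hxb⟩
      intro y hy hby
      exact le_antisymm hby (hb.2 hy hby)
  right_inv A := by
    apply Subtype.ext
    ext a
    simp only [Set.mem_setOf_eq]
    constructor
    · rintro ⟨⟨c, hc, hac⟩, hmax⟩
      have : a = c := hmax c ⟨c, hc, le_refl _⟩ hac
      rwa [this]
    · intro ha
      refine ⟨⟨a, ha, le_refl _⟩, ?_⟩
      rintro y ⟨c, hc, hyc⟩ hay
      by_cases hac : a = c
      · subst hac
        exact le_antisymm hay hyc
      · exact absurd (le_trans hay hyc) (A.2 ha hc hac)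

end CardStarAux
namespace CardStarAux

lemma natS_eq (μ : ℕ) (hμ : 3 ≤ μ) (S : NumSgp)
    (hS : S.carrier = {0} ∪ {x : ℕ | μ ≤ x ∧ x ≤ 2 * μ - 3} ∪ {x : ℕ | 2 * μ - 1 ≤ x}) :
    natS S = SZ μ := by
  ext x
  simp only [natS, Set.mem_image, hS, Set.mem_union, Set.mem_singleton_iff, Set.mem_setOf_eq,
    mem_SZ]
  constructor
  · rintro ⟨n, hn, rfl⟩
    omega
  · intro hx
    exact ⟨x.toNat, by omega, by omega⟩

end CardStarAux


/-- For `S = {0, μ, μ+1, …, 2μ−3, 2μ−1, →}` with `μ ≥ 3`, `|Star(S)| = 1 + D(μ − 2)`. -/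
theorem card_star_of_pseudosymmetric_2mu2 (μ : ℕ) (hμ : 3 ≤ μ) (S : NumSgp)
    (hS : S.carrier =
      {0} ∪ {x : ℕ | μ ≤ x ∧ x ≤ 2 * μ - 3} ∪ {x : ℕ | 2 * μ - 1 ≤ x}) :
    Nat.card (StarOp S) = 1 + dedekind (μ - 2) := by
  classical
  have hT := CardStarAux.natS_eq μ hμ S hS
  rw [Nat.card_congr ((CardStarAux.starEquiv S hμ hT).trans (CardStarAux.admEquiv hμ))]
  rw [Finite.card_option]
  rw [Nat.card_congr (CardStarAux.lowerAntichainEquiv (μ - 2))]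
  rw [dedekind]
  omega
end
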